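/- Let G be a nontrivial finite abelian group. Then k(G) + 1/exp(G) ≤ K(G) ≤ k(G) + 1/P⁻(exp(G)), where P⁻(n) denotes the smallest prime dividing an integer n > 1. -/

import Mathlib

/-- The cross number `k(S)` of a sequence (finite multiset) `S` over an additive group:
the sum, with multiplicity, of the reciprocals of the orders of its elements. -/
noncomputable def crossNum {G : Type*} [AddCommGroup G] (S : Multiset G) : ℝ :=
  (S.map fun g => ((addOrderOf g : ℝ))⁻¹).sum

/-- `S` is zero-sum free: no nonempty sub-multiset of `S` has sum `0`. -/
def IsZeroSumFree {G : Type*} [AddCommGroup G] (S : Multiset G) : Prop :=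
  ∀ T : Multiset G, T ≤ S → T ≠ 0 → T.sum ≠ 0

/-- The little cross number `k(G)`: the maximal cross number of a zero-sum free
sequence over `G`. -/
noncomputable def littleK (G : Type*) [AddCommGroup G] : ℝ :=
  sSup {x : ℝ | ∃ S : Multiset G, IsZeroSumFree S ∧ crossNum S = x}

/-- `S` is a minimal zero-sum sequence: nonempty, sum zero, and no nonempty proper
sub-multiset has sum `0`. -/
def IsMinZeroSum {G : Type*} [AddCommGroup G] (S : Multiset G) : Prop :=
  S ≠ 0 ∧ S.sum = 0 ∧ ∀ T : Multiset G, T ≤ S → T ≠ 0 → T ≠ S → T.sum ≠ 0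

/-- The cross number `K(G)`: the maximal cross number of a minimal zero-sum
sequence over `G`. -/
noncomputable def bigK (G : Type*) [AddCommGroup G] : ℝ :=
  sSup {x : ℝ | ∃ S : Multiset G, IsMinZeroSum S ∧ crossNum S = x}

/-!
Adding the element `-σ(S)` to a zero-sum free sequence `S` produces a minimal zero-sum
sequence, and the added term has order at most `exp(G)`; this gives the lower bound.
Conversely, removing any term `g` from a minimal zero-sum sequence leaves a zero-sum free
sequence, and `1/ord(g) ≤ 1/P⁻(exp(G))` as soon as `g ≠ 0`; the only minimal zero-sum
sequence containing `0` is the one-term sequence `0`, whose cross number `1` is covered by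
`k(G) ≥ 1 - 1/exp(G)`, witnessed by `exp(G) - 1` copies of an element of maximal order.
-/

section General

variable {G : Type*} [AddCommGroup G]

@[simp]
lemma crossNum_zero : crossNum (0 : Multiset G) = 0 := by
  simp [crossNum]

@[simp]
lemma crossNum_cons (g : G) (S : Multiset G) :
    crossNum (g ::ₘ S) = (addOrderOf g : ℝ)⁻¹ + crossNum S := by
  simp [crossNum]

lemma crossNum_replicate (n : ℕ) (g : G) :
    crossNum (Multiset.replicate n g) = n * (addOrderOf g : ℝ)⁻¹ := by
  simp [crossNum]

lemma crossNum_le_card_toFinset [DecidableEq G] {S : Multiset G}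
    (h : ∀ g, S.count g ≤ addOrderOf g) : crossNum S ≤ S.toFinset.card := by
  rw [crossNum, Finset.sum_multiset_map_count, Finset.card_eq_sum_ones, Nat.cast_sum]
  refine Finset.sum_le_sum fun g _ => ?_
  rw [nsmul_eq_mul, Nat.cast_one]
  rcases (addOrderOf g).eq_zero_or_pos with hg | hg
  · simp [hg]
  · rw [mul_inv_le_iff₀ (by exact_mod_cast hg), one_mul]
    exact_mod_cast h g

lemma isZeroSumFree_zero : IsZeroSumFree (0 : Multiset G) :=
  fun _ hT hT0 => absurd (Multiset.le_zero.1 hT) hT0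

lemma isZeroSumFree_replicate {n : ℕ} {g : G} (hn : n < addOrderOf g) :
    IsZeroSumFree (Multiset.replicate n g) := by
  intro T hT hT0 hsum
  obtain ⟨k, hk, rfl⟩ := Multiset.le_replicate_iff.1 hT
  have hk0 : k ≠ 0 := by rintro rfl; exact hT0 rfl
  rw [Multiset.sum_replicate] at hsum
  have := Nat.le_of_dvd (Nat.pos_of_ne_zero hk0) (addOrderOf_dvd_of_nsmul_eq_zero hsum)
  omega

lemma IsZeroSumFree.count_lt [DecidableEq G] {S : Multiset G} (hS : IsZeroSumFree S) {g : G}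
    (hg : 0 < addOrderOf g) : S.count g < addOrderOf g := by
  by_contra! hle
  refine hS _ (Multiset.le_count_iff_replicate_le.1 hle) ?_ ?_
  · rw [← Multiset.card_pos, Multiset.card_replicate]; exact hg
  · rw [Multiset.sum_replicate, addOrderOf_nsmul_eq_zero]

lemma IsZeroSumFree.isMinZeroSum_cons_neg_sum {S : Multiset G} (hS : IsZeroSumFree S) :
    IsMinZeroSum (-S.sum ::ₘ S) := by
  classical
  refine ⟨Multiset.cons_ne_zero, by simp, fun T hT hT0 hTS hsum => ?_⟩
  by_cases hmem : -S.sum ∈ T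
  · -- `T = -σ(S) :: T'` with `T' < S` and `σ(T') = σ(S)`, so `S - T'` is a nonempty zero sum.
    set T' := T.erase (-S.sum)
    have hT' : T' ≤ S := by simpa [T'] using Multiset.erase_le_erase (-S.sum) hT
    have hT'S : T' ≠ S := by
      rintro h; exact hTS (by rw [← Multiset.cons_erase hmem]; exact congrArg _ h)
    have hT'sum : T'.sum = S.sum := by
      rw [← Multiset.cons_erase hmem, Multiset.sum_cons] at hsum
      exact (neg_add_eq_zero.1 hsum).symm
    refine hS (S - T') tsub_le_self (fun h => hT'S (hT'.antisymm (tsub_eq_zero_iff_le.1 h))) ?_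
    have := Multiset.sum_add (S - T') T'
    rw [tsub_add_cancel_of_le hT', hT'sum] at this
    exact add_eq_right.1 this.symm
  · exact hS T ((Multiset.le_cons_of_notMem hmem).1 hT) hT0 hsum

lemma IsMinZeroSum.isZeroSumFree_erase [DecidableEq G] {S : Multiset G} (hS : IsMinZeroSum S)
    {g : G} (hg : g ∈ S) : IsZeroSumFree (S.erase g) := fun T hT hT0 =>
  hS.2.2 T (hT.trans (S.erase_le g)) hT0 fun hTS => (Multiset.erase_lt.2 hg).not_ge (hTS ▸ hT)

lemma IsMinZeroSum.eq_singleton_zero {S : Multiset G} (hS : IsMinZeroSum S) (h0 : (0 : G) ∈ S) :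
    S = {0} := by
  by_contra hne
  exact hS.2.2 {0} (Multiset.singleton_le.2 h0) (by simp) (Ne.symm hne) (by simp)

lemma inv_addOrderOf_le_inv_minFac_exponent {g : G} (hg : g ≠ 0) :
    (addOrderOf g : ℝ)⁻¹ ≤ ((AddMonoid.exponent G).minFac : ℝ)⁻¹ := by
  rcases (addOrderOf g).eq_zero_or_pos with h0 | hpos
  · rw [h0, Nat.cast_zero, inv_zero]
    positivity
  have hord : 2 ≤ addOrderOf g := by
    have : addOrderOf g ≠ 1 := mt AddMonoid.addOrderOf_eq_one_iff.1 hg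
    omega
  exact inv_anti₀ (by exact_mod_cast Nat.minFac_pos _)
    (by exact_mod_cast Nat.minFac_le_of_dvd hord (AddMonoid.addOrder_dvd_exponent g))

end General

section Finite

variable {G : Type*} [AddCommGroup G] [Finite G]

lemma inv_exponent_le_inv_addOrderOf (g : G) :
    (AddMonoid.exponent G : ℝ)⁻¹ ≤ (addOrderOf g : ℝ)⁻¹ :=
  inv_anti₀ (by exact_mod_cast addOrderOf_pos g)
    (by exact_mod_cast AddMonoid.addOrderOf_le_exponent AddMonoid.ExponentExists.of_finite g)

lemma bddAbove_crossNum_isZeroSumFree :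
    BddAbove {x : ℝ | ∃ S : Multiset G, IsZeroSumFree S ∧ crossNum S = x} := by
  classical
  have := Fintype.ofFinite G
  refine ⟨Nat.card G, ?_⟩
  rintro _ ⟨S, hS, rfl⟩
  calc crossNum S ≤ S.toFinset.card :=
        crossNum_le_card_toFinset fun g => (hS.count_lt (addOrderOf_pos g)).le
    _ ≤ Nat.card G := by
        rw [Nat.card_eq_fintype_card]
        exact_mod_cast S.toFinset.card_le_univ

lemma IsZeroSumFree.crossNum_le_littleK {S : Multiset G} (hS : IsZeroSumFree S) :
    crossNum S ≤ littleK G :=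
  le_csSup bddAbove_crossNum_isZeroSumFree ⟨S, hS, rfl⟩

lemma littleK_nonneg : 0 ≤ littleK G :=
  crossNum_zero (G := G) ▸ isZeroSumFree_zero.crossNum_le_littleK

lemma one_sub_inv_exponent_le_littleK : 1 - (AddMonoid.exponent G : ℝ)⁻¹ ≤ littleK G := by
  obtain ⟨g, hg⟩ :=
    AddMonoid.exists_addOrderOf_eq_exponent (AddMonoid.ExponentExists.of_finite (G := G))
  have hpos := addOrderOf_pos g
  calc 1 - (AddMonoid.exponent G : ℝ)⁻¹
      = crossNum (Multiset.replicate (addOrderOf g - 1) g) := by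
        rw [crossNum_replicate, hg, Nat.cast_sub (hg ▸ hpos), Nat.cast_one, sub_mul,
          mul_inv_cancel₀ (by exact_mod_cast hg ▸ hpos.ne'), one_mul]
    _ ≤ littleK G := (isZeroSumFree_replicate (by omega)).crossNum_le_littleK

lemma IsMinZeroSum.crossNum_le_littleK_add {S : Multiset G} (hS : IsMinZeroSum S) :
    crossNum S ≤ littleK G + ((AddMonoid.exponent G).minFac : ℝ)⁻¹ := by
  classical
  obtain ⟨g, hg⟩ := Multiset.exists_mem_of_ne_zero hS.1
  rcases eq_or_ne g 0 with rfl | hg0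
  · have hexp_pos : 0 < AddMonoid.exponent G :=
      AddMonoid.exponent_pos.2 AddMonoid.ExponentExists.of_finite
    have hexp : (AddMonoid.exponent G : ℝ)⁻¹ ≤ ((AddMonoid.exponent G).minFac : ℝ)⁻¹ :=
      inv_anti₀ (by exact_mod_cast Nat.minFac_pos _) (by exact_mod_cast Nat.minFac_le hexp_pos)
    have hcross : crossNum ({0} : Multiset G) = 1 := by simp [crossNum]
    rw [hS.eq_singleton_zero hg, hcross]
    linarith [one_sub_inv_exponent_le_littleK (G := G)]
  · rw [← Multiset.cons_erase hg, crossNum_cons, add_comm]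
    exact add_le_add (hS.isZeroSumFree_erase hg).crossNum_le_littleK
      (inv_addOrderOf_le_inv_minFac_exponent hg0)

lemma IsMinZeroSum.crossNum_le_bigK {S : Multiset G} (hS : IsMinZeroSum S) :
    crossNum S ≤ bigK G :=
  le_csSup ⟨_, by rintro _ ⟨T, hT, rfl⟩; exact hT.crossNum_le_littleK_add⟩ ⟨S, hS, rfl⟩

lemma littleK_add_inv_exponent_le_bigK :
    littleK G + (AddMonoid.exponent G : ℝ)⁻¹ ≤ bigK G := by
  rw [← le_sub_iff_add_le]
  refine csSup_le ⟨0, 0, isZeroSumFree_zero, crossNum_zero⟩ ?_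
  rintro _ ⟨S, hS, rfl⟩
  rw [le_sub_iff_add_le]
  calc crossNum S + (AddMonoid.exponent G : ℝ)⁻¹
      ≤ crossNum S + (addOrderOf (-S.sum) : ℝ)⁻¹ :=
        add_le_add le_rfl (inv_exponent_le_inv_addOrderOf _)
    _ = crossNum (-S.sum ::ₘ S) := by rw [crossNum_cons, add_comm]
    _ ≤ bigK G := hS.isMinZeroSum_cons_neg_sum.crossNum_le_bigK

lemma bigK_le_littleK_add_inv_minFac_exponent :
    bigK G ≤ littleK G + ((AddMonoid.exponent G).minFac : ℝ)⁻¹ :=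
  Real.sSup_le (by rintro _ ⟨S, hS, rfl⟩; exact hS.crossNum_le_littleK_add)
    (add_nonneg (littleK_nonneg (G := G)) (by positivity))

end Finite

theorem littleK_add_inv_exponent_le_bigK_le_general
    (G : Type*) [AddCommGroup G] [Finite G] :
    littleK G + ((AddMonoid.exponent G : ℝ))⁻¹ ≤ bigK G ∧
      bigK G ≤ littleK G + (((AddMonoid.exponent G).minFac : ℝ))⁻¹ :=
  ⟨littleK_add_inv_exponent_le_bigK, bigK_le_littleK_add_inv_minFac_exponent⟩

/-- For a nontrivial finite abelian group `G`:
`k(G) + 1/exp(G) ≤ K(G) ≤ k(G) + 1/P⁻(exp(G))`, where `P⁻(n)` is the smallest prime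
divisor of `n`. -/
theorem littleK_add_inv_exponent_le_bigK_le
    (G : Type*) [AddCommGroup G] [Finite G] [Nontrivial G] :
    littleK G + ((AddMonoid.exponent G : ℝ))⁻¹ ≤ bigK G ∧
      bigK G ≤ littleK G + (((AddMonoid.exponent G).minFac : ℝ))⁻¹ :=
  littleK_add_inv_exponent_le_bigK_le_general G
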